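/- arXiv:1411.1785 — 5 statements merged into one kernel-verified Lean document; each statement's English description precedes it below -/
import Mathlib

section
/- Let N, N', L, d, n be natural numbers with L ≥ 1 and 1 ≤ N' ≤ N/2 + L, let M > 0, let λ, λ₁, …, λ_{N'} be positive reals with λᵢ ≥ λ for every i, let k₁, …, k_{N'} ∈ ℝ⁴, and let p⃗ be a finite tuple of vectors in ℝ⁴. Denote by (p⃗,ℓ) the tuple p⃗ with the vector ℓ appended, and let min_j λ_j, max_j λ_j run over j ∈ {1,…,N'}. Then ∫_ℓ e^{−‖ℓ‖²/λ²} · ∏_{i=1}^{N'} e^{−‖kᵢ+ℓ‖²/(α(N+2,L−1) λᵢ²)} · (log₊ max(|(p⃗,ℓ)|_M / min_j λ_j, (max_j λ_j)/M))ⁿ · Σ_{μ=0}^{d} (1/√(μ!)) (|(p⃗,ℓ)|/M)^μ ≤ 4π² λ⁴ · ∏_{i=1}^{N'} e^{−‖kᵢ‖²/(α(N,L) λᵢ²)} · [ (log₊ max(|p⃗|_M / min_j λ_j, (max_j λ_j)/M))ⁿ + √(n!) ] · (N'+1)^{(n+4)/2} · 2^d · max(1, λ/M)^d · Σ_{μ=0}^{d}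 (1/√(μ!)) (|p⃗|/M)^μ. -/
open MeasureTheory Real

/-- `log₊(x) = log(max(1,x))`. -/
noncomputable def logPlus (x : ℝ) : ℝ := Real.log (max 1 x)

/-- `α(N,L) = 2 (N/2 + 2L)²`. -/
noncomputable def alphaWeight (N L : ℕ) : ℝ := 2 * ((N : ℝ) / 2 + 2 * (L : ℝ)) ^ 2

/-- `|p⃗| = max over subsets I of ‖∑_{e∈I} p_e‖`. -/
noncomputable def tupleNorm {m : ℕ} (p : Fin m → EuclideanSpace ℝ (Fin 4)) : ℝ :=
  Finset.sup' (Finset.univ : Finset (Finset (Fin m))) ⟨∅, Finset.mem_univ _⟩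
    (fun I => ‖∑ e ∈ I, p e‖)

/-- `|p⃗|_M = max(|p⃗|, M)`. -/
noncomputable def tupleNormM (M : ℝ) {m : ℕ} (p : Fin m → EuclideanSpace ℝ (Fin 4)) : ℝ :=
  max (tupleNorm p) M

/-!
Put `t = ‖ℓ‖ / λ`. Completing the square with weights `x² / (x - 1)²` and `x² / (2x - 1)`, where
`x = N/2 + 2L`, trades the shift by `ℓ` in each of the `N' ≤ x - 1` Gaussians in the `kᵢ` for a
factor `exp (t² / (4 N'))`, so the whole product costs `exp (t² / 4)`. Appending `ℓ` to `p⃗`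
raises both tuple norms by at most `‖ℓ‖`: the logarithm grows by at most `log (1 + t)` and the
polynomial is evaluated at `|p⃗|/M + (λ/M) t`. What is left of `exp (-t²)` is split three ways:
`exp (-3t²/8)` absorbs the powers of `log (1 + t)` at the cost of `√n!` (from
`xⁿ ≤ √n! e^{x²/2}`), `exp (-t²/4)` absorbs the powers of `t` in the binomial expansion at the
cost of `2^d max(1, λ/M)^d` (from `tⁱ e^{-t²/4} ≤ √(2ⁱ i!)`), and `exp (-t²/8)` is integrated.
-/

open Nat

theorem pow_le_sqrt_factorial_mul_exp (x : ℝ) (n : ℕ) :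
    x ^ n ≤ √(n ! : ℝ) * exp (x ^ 2 / 2) := by
  have h : (x ^ n) ^ 2 ≤ n ! * exp (x ^ 2) := by
    rw [← pow_mul, mul_comm, pow_mul, ← div_le_iff₀' (by positivity)]
    exact pow_div_factorial_le_exp (x ^ 2) (sq_nonneg x) n
  calc x ^ n ≤ |x ^ n| := le_abs_self _
    _ ≤ √(n ! * exp (x ^ 2)) := abs_le_sqrt h
    _ = √(n ! : ℝ) * exp (x ^ 2 / 2) := by rw [sqrt_mul (by positivity), ← exp_half]

theorem pow_mul_exp_neg_sq_le (t : ℝ) (i : ℕ) :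
    t ^ i * exp (-(t ^ 2 / 4)) ≤ √2 ^ i * √(i ! : ℝ) := by
  have h := pow_le_sqrt_factorial_mul_exp (t / √2) i
  rw [div_pow, div_pow, sq_sqrt zero_le_two, div_le_iff₀ (by positivity)] at h
  rw [← le_div_iff₀ (exp_pos _), exp_neg, div_inv_eq_mul]
  convert h using 1
  ring_nf

theorem add_pow_le_sqrt_two_pow_mul {a u : ℝ} (ha : 0 ≤ a) (hu : 0 ≤ u) (n : ℕ) :
    (a + u) ^ n ≤ √2 ^ n * (a ^ n + ((1 + √2) * u) ^ n) := by
  have h2 : √2 ^ 2 = 2 := sq_sqrt zero_le_two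
  have h1 : 1 ≤ √2 := one_le_sqrt.mpr one_le_two
  have hu' : 0 ≤ ((1 + √2) * u) ^ n := by positivity
  rcases le_total a ((1 + √2) * u) with h | h
  · calc (a + u) ^ n ≤ (√2 * ((1 + √2) * u)) ^ n := by gcongr; nlinarith
      _ ≤ √2 ^ n * (a ^ n + ((1 + √2) * u) ^ n) := by
        rw [mul_pow]; gcongr; linarith [pow_nonneg ha n]
  · calc (a + u) ^ n ≤ (√2 * a) ^ n := by gcongr; nlinarith
      _ ≤ √2 ^ n * (a ^ n + ((1 + √2) * u) ^ n) := by
        rw [mul_pow]; gcongr; linarith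

/-- The constant `4` is what the final estimate can afford: `exp 4 ≤ π ^ 4`. -/
theorem sq_log_one_add_le {t : ℝ} (ht : 0 ≤ t) :
    ((1 + √2) * log (1 + t)) ^ 2 / 2 ≤ 4 + 3 * t ^ 2 / 8 := by
  set s := log (1 + t)
  have hs : 0 ≤ s := log_nonneg (by linarith)
  have hts : t = exp s - 1 := by rw [exp_log (by linarith)]; ring
  have hexp : 1 + s + s ^ 2 / 2 + s ^ 3 / 6 ≤ exp s := by
    have := sum_le_exp_of_nonneg hs 4
    norm_num [Finset.sum_range_succ, Nat.factorial] at this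
    linarith
  have hc : (1 + √2) ^ 2 ≤ 5.83 := by
    nlinarith [sq_sqrt (zero_le_two (α := ℝ)), sqrt_nonneg 2]
  have hsq : (s + s ^ 2 / 2 + s ^ 3 / 6) ^ 2 ≤ t ^ 2 := by gcongr; linarith
  rw [mul_pow]
  nlinarith [mul_le_mul_of_nonneg_right hc (sq_nonneg s), sq_nonneg (s - 3 / 2),
    sq_nonneg (s ^ 2 - 2), mul_nonneg hs (sq_nonneg (s - 3 / 2))]

theorem add_log_one_add_pow_mul_exp_le {a t : ℝ} (ha : 0 ≤ a) (ht : 0 ≤ t) (n : ℕ) :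
    (a + log (1 + t)) ^ n * exp (-(3 * t ^ 2 / 8)) ≤
      √2 ^ n * (a ^ n + exp 4 * √(n ! : ℝ)) := by
  set u := log (1 + t)
  set E := exp (-(3 * t ^ 2 / 8))
  have hu : 0 ≤ u := log_nonneg (by linarith)
  have hmoment : ((1 + √2) * u) ^ n * E ≤ exp 4 * √(n ! : ℝ) :=
    calc ((1 + √2) * u) ^ n * E ≤ √(n ! : ℝ) * exp (((1 + √2) * u) ^ 2 / 2) * E := by
          gcongr; exact pow_le_sqrt_factorial_mul_exp _ n
      _ ≤ √(n ! : ℝ) * exp (4 + 3 * t ^ 2 / 8) * E := by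
          gcongr; exact sq_log_one_add_le ht
      _ = exp 4 * √(n ! : ℝ) := by rw [mul_assoc, ← exp_add]; ring_nf
  have hdecay : E ≤ 1 := exp_le_one_iff.mpr (by nlinarith)
  calc (a + u) ^ n * E ≤ √2 ^ n * (a ^ n + ((1 + √2) * u) ^ n) * E := by
        gcongr; exact add_pow_le_sqrt_two_pow_mul ha hu n
    _ = √2 ^ n * (a ^ n * E + ((1 + √2) * u) ^ n * E) := by ring
    _ ≤ √2 ^ n * (a ^ n + exp 4 * √(n ! : ℝ)) := by
        gcongr
        exact mul_le_of_le_one_right (pow_nonneg ha n) hdecay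

theorem choose_mul_sqrt_factorial_le {μ ν : ℕ} (h : ν ≤ μ) :
    μ.choose ν * (√2 ^ (μ - ν) * √((μ - ν) ! : ℝ)) * √(ν ! : ℝ) ≤ 2 ^ μ * √(μ ! : ℝ) := by
  have hfac : (μ.choose ν : ℝ) * ν ! * (μ - ν) ! = μ ! := by
    exact_mod_cast choose_mul_factorial_mul_factorial h
  have hC : (μ.choose ν : ℝ) ≤ 2 ^ μ := by exact_mod_cast choose_le_two_pow μ ν
  have hi : (2 : ℝ) ^ (μ - ν) ≤ 2 ^ μ := pow_le_pow_right₀ one_le_two (Nat.sub_le μ ν)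
  refine le_of_pow_le_pow_left₀ two_ne_zero (by positivity) ?_
  calc (μ.choose ν * (√2 ^ (μ - ν) * √((μ - ν) ! : ℝ)) * √(ν ! : ℝ)) ^ 2
      = (μ.choose ν * 2 ^ (μ - ν)) * (μ.choose ν * ν ! * (μ - ν) !) := by
        rw [mul_pow, mul_pow, mul_pow, ← pow_mul, mul_comm (μ - ν) 2, pow_mul,
          sq_sqrt zero_le_two, sq_sqrt (by positivity), sq_sqrt (by positivity)]
        ring
    _ ≤ (2 ^ μ * 2 ^ μ) * μ ! := by rw [hfac]; gcongr
    _ = (2 ^ μ * √(μ ! : ℝ)) ^ 2 := by rw [mul_pow, sq_sqrt (by positivity)]; ring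

noncomputable def sqrtExpSum (d : ℕ) (z : ℝ) : ℝ :=
  ∑ μ ∈ Finset.range (d + 1), 1 / √(μ ! : ℝ) * z ^ μ

theorem sqrtExpSum_nonneg (d : ℕ) {z : ℝ} (hz : 0 ≤ z) : 0 ≤ sqrtExpSum d z :=
  Finset.sum_nonneg fun _ _ => by positivity

theorem sqrtExpSum_mono (d : ℕ) {z w : ℝ} (hz : 0 ≤ z) (hzw : z ≤ w) :
    sqrtExpSum d z ≤ sqrtExpSum d w :=
  Finset.sum_le_sum fun _ _ => by gcongr

theorem pow_add_mul_mul_exp_le {x y t : ℝ} (hx : 0 ≤ x) (hy : 0 ≤ y) (ht : 0 ≤ t) (μ : ℕ) :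
    1 / √(μ ! : ℝ) * (x + y * t) ^ μ * exp (-(t ^ 2 / 4)) ≤
      2 ^ μ * max 1 y ^ μ * sqrtExpSum μ x := by
  rw [add_pow, Finset.mul_sum, Finset.sum_mul, sqrtExpSum, Finset.mul_sum]
  refine Finset.sum_le_sum fun ν hν => ?_
  have hνμ : ν ≤ μ := Nat.lt_succ_iff.mp (Finset.mem_range.mp hν)
  have hy' : y ^ (μ - ν) ≤ max 1 y ^ μ :=
    (pow_le_pow_left₀ hy (le_max_right 1 y) _).trans
      (pow_le_pow_right₀ (le_max_left 1 y) (Nat.sub_le μ ν))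
  have hν : 0 < √(ν ! : ℝ) := sqrt_pos.mpr (by positivity)
  calc 1 / √(μ ! : ℝ) * (x ^ ν * (y * t) ^ (μ - ν) * μ.choose ν) * exp (-(t ^ 2 / 4))
      = x ^ ν * y ^ (μ - ν) * (μ.choose ν * (t ^ (μ - ν) * exp (-(t ^ 2 / 4)))) /
          √(μ ! : ℝ) := by ring
    _ ≤ x ^ ν * max 1 y ^ μ * (μ.choose ν * (√2 ^ (μ - ν) * √((μ - ν) ! : ℝ))) /
          √(μ ! : ℝ) := by
        gcongr x ^ ν * ?_ * (_ * ?_) / _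
        exact pow_mul_exp_neg_sq_le t _
    _ ≤ x ^ ν * max 1 y ^ μ * (2 ^ μ * √(μ ! : ℝ) / √(ν ! : ℝ)) / √(μ ! : ℝ) := by
        gcongr
        rw [le_div_iff₀ hν]
        exact choose_mul_sqrt_factorial_le hνμ
    _ = 2 ^ μ * max 1 y ^ μ * (1 / √(ν ! : ℝ) * x ^ ν) := by field_simp

theorem sqrtExpSum_add_mul_mul_exp_le {x y t : ℝ} (hx : 0 ≤ x) (hy : 0 ≤ y) (ht : 0 ≤ t)
    (d : ℕ) :
    sqrtExpSum d (x + y * t) * exp (-(t ^ 2 / 4)) ≤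
      2 ^ (d + 1) * max 1 y ^ d * sqrtExpSum d x := by
  have hS := sqrtExpSum_nonneg d hx
  have hm : 1 ≤ max 1 y := le_max_left 1 y
  calc sqrtExpSum d (x + y * t) * exp (-(t ^ 2 / 4))
      = ∑ μ ∈ Finset.range (d + 1), 1 / √(μ ! : ℝ) * (x + y * t) ^ μ * exp (-(t ^ 2 / 4)) :=
        Finset.sum_mul ..
    _ ≤ ∑ μ ∈ Finset.range (d + 1), 2 ^ μ * (max 1 y ^ d * sqrtExpSum d x) := by
        refine Finset.sum_le_sum fun μ hμ => ?_
        have hμd : μ ≤ d := Nat.lt_succ_iff.mp (Finset.mem_range.mp hμ)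
        refine (pow_add_mul_mul_exp_le hx hy ht μ).trans ?_
        rw [mul_assoc]
        gcongr 2 ^ μ * ?_
        refine mul_le_mul (pow_le_pow_right₀ hm hμd) ?_ (sqrtExpSum_nonneg μ hx) (by positivity)
        exact Finset.sum_le_sum_of_subset_of_nonneg (Finset.range_subset_range.mpr (by omega))
          fun _ _ _ => by positivity
    _ ≤ 2 ^ (d + 1) * max 1 y ^ d * sqrtExpSum d x := by
        rw [← Finset.sum_mul, mul_assoc]
        gcongr
        have h := geom_sum_mul_add (1 : ℝ) (d + 1)
        norm_num at h
        linarith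

theorem exp_mul_add_log_pow_mul_sqrtExpSum_le {a x y t : ℝ} (ha : 0 ≤ a) (hx : 0 ≤ x)
    (hy : 0 ≤ y) (ht : 0 ≤ t) (n d : ℕ) :
    exp (-t ^ 2) * exp (t ^ 2 / 4) * (a + log (1 + t)) ^ n * sqrtExpSum d (x + y * t) ≤
      √2 ^ n * (a ^ n + exp 4 * √(n ! : ℝ)) * (2 ^ (d + 1) * max 1 y ^ d * sqrtExpSum d x) *
        exp (-(t ^ 2 / 8)) := by
  have hsplit : exp (-t ^ 2) * exp (t ^ 2 / 4) =
      exp (-(3 * t ^ 2 / 8)) * exp (-(t ^ 2 / 4)) * exp (-(t ^ 2 / 8)) := by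
    simp only [← exp_add]; ring_nf
  calc exp (-t ^ 2) * exp (t ^ 2 / 4) * (a + log (1 + t)) ^ n * sqrtExpSum d (x + y * t)
      = (a + log (1 + t)) ^ n * exp (-(3 * t ^ 2 / 8)) *
          (sqrtExpSum d (x + y * t) * exp (-(t ^ 2 / 4))) * exp (-(t ^ 2 / 8)) := by
        rw [hsplit]; ring
    _ ≤ _ :=
        mul_le_mul_of_nonneg_right (mul_le_mul (add_log_one_add_pow_mul_exp_le ha ht n)
          (sqrtExpSum_add_mul_mul_exp_le hx hy ht d)
          (mul_nonneg (sqrtExpSum_nonneg d (by positivity)) (exp_pos _).le) (by positivity))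
          (exp_pos _).le

theorem add_sq_div_sq_le {x B r : ℝ} (hx : 1 < x) :
    (B + r) ^ 2 / x ^ 2 ≤ B ^ 2 / (x - 1) ^ 2 + r ^ 2 / (2 * x - 1) := by
  have h1 : 0 < x - 1 := by linarith
  rw [div_add_div _ _ (by positivity) (by linarith),
    div_le_div_iff₀ (by positivity) (by nlinarith)]
  nlinarith [sq_nonneg ((2 * x - 1) * B - (x - 1) ^ 2 * r)]

theorem exp_neg_norm_add_sq_le {E : Type*} [SeminormedAddCommGroup E] (k ℓ : E) {x c : ℝ}
    (hx : 1 < x) (hc : 0 < c) :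
    exp (-‖k + ℓ‖ ^ 2 / (2 * (x - 1) ^ 2 * c)) ≤
      exp (-‖k‖ ^ 2 / (2 * x ^ 2 * c)) * exp (‖ℓ‖ ^ 2 / (2 * (2 * x - 1) * c)) := by
  have hk : ‖k‖ ≤ ‖k + ℓ‖ + ‖ℓ‖ := by simpa using norm_sub_le (k + ℓ) ℓ
  have h := (div_le_div_of_nonneg_right (pow_le_pow_left₀ (norm_nonneg k) hk 2)
    (sq_nonneg x)).trans (add_sq_div_sq_le (B := ‖k + ℓ‖) (r := ‖ℓ‖) hx)
  have h' := div_le_div_of_nonneg_right h (by positivity : 0 ≤ 2 * c)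
  have e : ∀ a b : ℝ, a / (2 * b * c) = a / b / (2 * c) := fun a b => by ring
  rw [add_div] at h'
  rw [← exp_add, exp_le_exp, neg_div, neg_div, e, e, e]
  linarith

theorem prod_exp_neg_alphaWeight_le {E : Type*} [SeminormedAddCommGroup E] {N N' L : ℕ}
    (hL : 1 ≤ L) (hN' : (N' : ℝ) ≤ (N : ℝ) / 2 + (L : ℝ)) {lam : ℝ} (hlam : 0 < lam)
    {lams : Fin N' → ℝ} (hlams : ∀ i, lam ≤ lams i) (k : Fin N' → E) (ℓ : E) :
    ∏ i, exp (-‖k i + ℓ‖ ^ 2 / (alphaWeight (N + 2) (L - 1) * lams i ^ 2)) ≤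
      exp (‖ℓ‖ ^ 2 / (4 * lam ^ 2)) *
        ∏ i, exp (-‖k i‖ ^ 2 / (alphaWeight N L * lams i ^ 2)) := by
  set G := ∏ i, exp (-‖k i‖ ^ 2 / (alphaWeight N L * lams i ^ 2))
  set x : ℝ := (N : ℝ) / 2 + 2 * L with hxdef
  have hL' : (1 : ℝ) ≤ L := by exact_mod_cast hL
  have hx : 1 < x := by linarith [show (0 : ℝ) ≤ N / 2 by positivity]
  have hN'x : 4 * (N' : ℝ) ≤ 2 * (2 * x - 1) := by linarith
  have hpos : 0 < 2 * (2 * x - 1) := by linarith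
  have hα : alphaWeight N L = 2 * x ^ 2 := rfl
  have hα' : alphaWeight (N + 2) (L - 1) = 2 * (x - 1) ^ 2 := by
    simp only [alphaWeight, x, Nat.cast_sub hL]; push_cast; ring
  have hfactor : ∀ i, exp (-‖k i + ℓ‖ ^ 2 / (alphaWeight (N + 2) (L - 1) * lams i ^ 2)) ≤
      exp (-‖k i‖ ^ 2 / (alphaWeight N L * lams i ^ 2)) *
        exp (‖ℓ‖ ^ 2 / (2 * (2 * x - 1) * lam ^ 2)) := by
    intro i
    rw [hα, hα']
    refine (exp_neg_norm_add_sq_le (k i) ℓ hx (by nlinarith [hlams i])).trans ?_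
    gcongr _ * exp (_ / (_ * ?_ ^ 2))
    exact hlams i
  calc ∏ i, exp (-‖k i + ℓ‖ ^ 2 / (alphaWeight (N + 2) (L - 1) * lams i ^ 2))
      ≤ ∏ i, (exp (-‖k i‖ ^ 2 / (alphaWeight N L * lams i ^ 2)) *
          exp (‖ℓ‖ ^ 2 / (2 * (2 * x - 1) * lam ^ 2))) :=
        Finset.prod_le_prod (fun _ _ => (exp_pos _).le) fun i _ => hfactor i
    _ = exp (N' * (‖ℓ‖ ^ 2 / (2 * (2 * x - 1) * lam ^ 2))) * G := by
        rw [Finset.prod_mul_distrib, Finset.prod_const, Finset.card_univ, Fintype.card_fin,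
          exp_nat_mul, mul_comm]
    _ ≤ exp (‖ℓ‖ ^ 2 / (4 * lam ^ 2)) * G := by
        gcongr
        rw [mul_div_assoc', div_le_div_iff₀ (by nlinarith) (by positivity)]
        nlinarith [sq_nonneg ‖ℓ‖, sq_nonneg lam, mul_nonneg (sq_nonneg ‖ℓ‖) (sq_nonneg lam)]

theorem logPlus_nonneg (x : ℝ) : 0 ≤ logPlus x := log_nonneg (le_max_left 1 x)

theorem logPlus_mono : Monotone logPlus := fun _ _ h =>
  log_le_log (one_pos.trans_le (le_max_left _ _)) (max_le_max le_rfl h)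

theorem logPlus_add_le (x : ℝ) {t : ℝ} (ht : 0 ≤ t) :
    logPlus (x + t) ≤ logPlus x + log (1 + t) := by
  have h1 : 1 ≤ max 1 x := le_max_left 1 x
  rw [logPlus, logPlus, ← log_mul (by positivity) (by positivity)]
  refine log_le_log (by positivity) (max_le (by nlinarith) ?_)
  nlinarith [le_max_right 1 x]

theorem norm_sum_le_tupleNorm {m : ℕ} (p : Fin m → EuclideanSpace ℝ (Fin 4))
    (I : Finset (Fin m)) : ‖∑ e ∈ I, p e‖ ≤ tupleNorm p :=
  Finset.le_sup' (fun I => ‖∑ e ∈ I, p e‖) (Finset.mem_univ I)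

theorem tupleNorm_nonneg {m : ℕ} (p : Fin m → EuclideanSpace ℝ (Fin 4)) : 0 ≤ tupleNorm p := by
  simpa using norm_sum_le_tupleNorm p ∅

theorem tupleNorm_snoc_le {m : ℕ} (p : Fin m → EuclideanSpace ℝ (Fin 4))
    (ℓ : EuclideanSpace ℝ (Fin 4)) : tupleNorm (Fin.snoc p ℓ) ≤ tupleNorm p + ‖ℓ‖ := by
  classical
  refine Finset.sup'_le _ _ fun I _ => ?_
  have hsplit : ∑ e ∈ I, (Fin.snoc p ℓ : Fin (m + 1) → _) e =
      ∑ j ∈ Finset.univ.filter (fun j : Fin m => j.castSucc ∈ I), p j +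
        if Fin.last m ∈ I then ℓ else 0 := by
    rw [← Finset.sum_ite_mem_eq, Fin.sum_univ_castSucc, Finset.sum_filter]
    simp only [Fin.snoc_castSucc, Fin.snoc_last]
  rw [hsplit]
  refine (norm_add_le _ _).trans (add_le_add (norm_sum_le_tupleNorm p _) ?_)
  split_ifs <;> simp

theorem tupleNormM_snoc_le (M : ℝ) {m : ℕ} (p : Fin m → EuclideanSpace ℝ (Fin 4))
    (ℓ : EuclideanSpace ℝ (Fin 4)) : tupleNormM M (Fin.snoc p ℓ) ≤ tupleNormM M p + ‖ℓ‖ :=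
  max_le ((tupleNorm_snoc_le p ℓ).trans (by gcongr; exact le_max_left _ _))
    ((le_max_right _ _).trans (le_add_of_nonneg_right (norm_nonneg ℓ)))

theorem logPlus_max_snoc_le {M lam lo : ℝ} (hlam : 0 < lam) (hlo : lam ≤ lo) (c : ℝ) {m : ℕ}
    (p : Fin m → EuclideanSpace ℝ (Fin 4)) (ℓ : EuclideanSpace ℝ (Fin 4)) :
    logPlus (max (tupleNormM M (Fin.snoc p ℓ) / lo) c) ≤
      logPlus (max (tupleNormM M p / lo) c) + log (1 + ‖ℓ‖ / lam) := by
  have hlo' : 0 < lo := hlam.trans_le hlo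
  refine (logPlus_mono (max_le ?_ ?_)).trans (logPlus_add_le _ (by positivity))
  · calc tupleNormM M (Fin.snoc p ℓ) / lo ≤ (tupleNormM M p + ‖ℓ‖) / lo := by
          gcongr; exact tupleNormM_snoc_le M p ℓ
      _ = tupleNormM M p / lo + ‖ℓ‖ / lo := add_div _ _ _
      _ ≤ max (tupleNormM M p / lo) c + ‖ℓ‖ / lam := by gcongr; exact le_max_left _ _
  · exact (le_max_right _ _).trans (le_add_of_nonneg_right (by positivity))

theorem integrand_nonneg {N N' L d n m : ℕ} {M : ℝ} (hM : 0 < M) (lo c : ℝ) {lam : ℝ}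
    {lams : Fin N' → ℝ} (k : Fin N' → EuclideanSpace ℝ (Fin 4))
    (p : Fin m → EuclideanSpace ℝ (Fin 4)) (ℓ : EuclideanSpace ℝ (Fin 4)) :
    0 ≤ exp (-‖ℓ‖ ^ 2 / lam ^ 2) *
        (∏ i, exp (-‖k i + ℓ‖ ^ 2 / (alphaWeight (N + 2) (L - 1) * lams i ^ 2))) *
        logPlus (max (tupleNormM M (Fin.snoc p ℓ) / lo) c) ^ n *
        sqrtExpSum d (tupleNorm (Fin.snoc p ℓ) / M) := by
  have := logPlus_nonneg (max (tupleNormM M (Fin.snoc p ℓ) / lo) c)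
  have := sqrtExpSum_nonneg d (div_nonneg (tupleNorm_nonneg (Fin.snoc p ℓ)) hM.le)
  positivity

theorem integrand_le {N N' L d n m : ℕ} (hL : 1 ≤ L) (hN' : (N' : ℝ) ≤ (N : ℝ) / 2 + (L : ℝ))
    {M lam lo : ℝ} (hM : 0 < M) (hlam : 0 < lam) (hlo : lam ≤ lo) (c : ℝ)
    {lams : Fin N' → ℝ} (hlams : ∀ i, lam ≤ lams i) (k : Fin N' → EuclideanSpace ℝ (Fin 4))
    (p : Fin m → EuclideanSpace ℝ (Fin 4)) (ℓ : EuclideanSpace ℝ (Fin 4)) :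
    exp (-‖ℓ‖ ^ 2 / lam ^ 2) *
        (∏ i, exp (-‖k i + ℓ‖ ^ 2 / (alphaWeight (N + 2) (L - 1) * lams i ^ 2))) *
        logPlus (max (tupleNormM M (Fin.snoc p ℓ) / lo) c) ^ n *
        sqrtExpSum d (tupleNorm (Fin.snoc p ℓ) / M) ≤
      (∏ i, exp (-‖k i‖ ^ 2 / (alphaWeight N L * lams i ^ 2))) *
        (√2 ^ n * (logPlus (max (tupleNormM M p / lo) c) ^ n + exp 4 * √(n ! : ℝ))) *
        (2 ^ (d + 1) * max 1 (lam / M) ^ d * sqrtExpSum d (tupleNorm p / M)) *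
        exp (-(1 / (8 * lam ^ 2)) * ‖ℓ‖ ^ 2) := by
  set G := ∏ i, exp (-‖k i‖ ^ 2 / (alphaWeight N L * lams i ^ 2))
  set a := logPlus (max (tupleNormM M p / lo) c)
  set t := ‖ℓ‖ / lam
  have ht : 0 ≤ t := by positivity
  have hsq : ‖ℓ‖ ^ 2 = lam ^ 2 * t ^ 2 := by simp only [t]; field_simp
  have hP := tupleNorm_nonneg p
  -- nonnegativity facts for the side goals of `gcongr` and `positivity`
  have ha : 0 ≤ a := logPlus_nonneg _
  have ha' := logPlus_nonneg (max (tupleNormM M (Fin.snoc p ℓ) / lo) c)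
  have hu : 0 ≤ log (1 + t) := log_nonneg (by linarith)
  have hS := sqrtExpSum_nonneg d (div_nonneg (tupleNorm_nonneg (Fin.snoc p ℓ)) hM.le)
  have hlog := pow_le_pow_left₀ ha' (logPlus_max_snoc_le (M := M) hlam hlo c p ℓ) n
  have hsum : sqrtExpSum d (tupleNorm (Fin.snoc p ℓ) / M) ≤
      sqrtExpSum d (tupleNorm p / M + lam / M * t) := by
    refine sqrtExpSum_mono d (div_nonneg (tupleNorm_nonneg _) hM.le) ?_
    rw [show lam / M * t = ‖ℓ‖ / M by simp only [t]; field_simp, ← add_div]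
    gcongr
    exact tupleNorm_snoc_le p ℓ
  have hprod := prod_exp_neg_alphaWeight_le hL hN' hlam hlams k ℓ
  rw [hsq, show lam ^ 2 * t ^ 2 / (4 * lam ^ 2) = t ^ 2 / 4 by field_simp] at hprod
  calc _ ≤ exp (-t ^ 2) * (exp (t ^ 2 / 4) * G) * (a + log (1 + t)) ^ n *
          sqrtExpSum d (tupleNorm p / M + lam / M * t) := by
        rw [hsq, neg_div, mul_div_cancel_left₀ _ (by positivity)]
        gcongr
    _ = G * (exp (-t ^ 2) * exp (t ^ 2 / 4) * (a + log (1 + t)) ^ n *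
          sqrtExpSum d (tupleNorm p / M + lam / M * t)) := by ring
    _ ≤ _ := by
        refine (mul_le_mul_of_nonneg_left (exp_mul_add_log_pow_mul_sqrtExpSum_le ha
          (div_nonneg hP hM.le) (div_pos hlam hM).le ht n d) (by positivity)).trans_eq ?_
        rw [hsq, show -(1 / (8 * lam ^ 2)) * (lam ^ 2 * t ^ 2) = -(t ^ 2 / 8) by field_simp]
        ring

theorem integral_exp_neg_mul_sq_norm_fin_four {b : ℝ} (hb : 0 < b) :
    ∫ v : EuclideanSpace ℝ (Fin 4), exp (-b * ‖v‖ ^ 2) = (π / b) ^ 2 := by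
  rw [GaussianFourier.integral_rexp_neg_mul_sq_norm hb, finrank_euclideanSpace_fin]
  norm_num

theorem integral_le_of_le_mul_gaussian {f : EuclideanSpace ℝ (Fin 4) → ℝ} (hf : 0 ≤ f)
    {C b : ℝ} (hb : 0 < b) (h : ∀ v, f v ≤ C * exp (-b * ‖v‖ ^ 2)) :
    ∫ v, f v ≤ C * (π / b) ^ 2 := by
  have hg : Integrable fun v : EuclideanSpace ℝ (Fin 4) => exp (-b * ‖v‖ ^ 2) :=
    .of_integral_ne_zero (by rw [integral_exp_neg_mul_sq_norm_fin_four hb]; positivity)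
  calc ∫ v, f v ≤ ∫ v, C * exp (-b * ‖v‖ ^ 2) :=
        integral_mono_of_nonneg (.of_forall hf) (hg.const_mul C) (.of_forall h)
    _ = C * (π / b) ^ 2 := by rw [integral_const_mul, integral_exp_neg_mul_sq_norm_fin_four hb]

theorem four_mul_sqrt_two_pow_le_rpow {N' : ℕ} (hN' : 1 ≤ N') (n : ℕ) :
    4 * √2 ^ n ≤ ((N' : ℝ) + 1) ^ (((n : ℝ) + 4) / 2) :=
  calc 4 * √2 ^ n = (2 : ℝ) ^ (((n : ℝ) + 4) / 2) := by
        rw [show ((n : ℝ) + 4) / 2 = 1 / 2 * ((n + 4 : ℕ) : ℝ) by push_cast; ring,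
          rpow_mul_natCast zero_le_two, ← sqrt_eq_rpow, pow_add,
          show √2 ^ 4 = (√2 ^ 2) ^ 2 by ring, sq_sqrt zero_le_two]
        ring
    _ ≤ ((N' : ℝ) + 1) ^ (((n : ℝ) + 4) / 2) :=
        rpow_le_rpow zero_le_two (by norm_cast; omega) (by positivity)

theorem exp_four_le_pi_pow_four : exp 4 ≤ π ^ 4 := by
  rw [show (4 : ℝ) = (4 : ℕ) * 1 by norm_num, exp_nat_mul]
  exact pow_le_pow_left₀ (exp_pos 1).le (exp_one_lt_three.trans pi_gt_three).le 4

theorem sqrt_two_pow_mul_add_exp_four_le {A s W : ℝ} (hA : 0 ≤ A) (hs : 0 ≤ s) {n : ℕ}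
    (hW : 4 * √2 ^ n ≤ W) :
    √2 ^ n * (A + exp 4 * s) * 8 / π ^ 2 ≤ 4 * π ^ 2 * (A + s) * W := by
  have hπ : 1 ≤ π ^ 4 := one_le_pow₀ (by linarith [pi_gt_three])
  have hA' : A + exp 4 * s ≤ π ^ 4 * (A + s) := by nlinarith [exp_four_le_pi_pow_four]
  rw [div_le_iff₀ (by positivity)]
  calc √2 ^ n * (A + exp 4 * s) * 8 ≤ √2 ^ n * (π ^ 4 * (A + s)) * 8 := by gcongr
    _ ≤ 4 * π ^ 4 * (A + s) * (4 * √2 ^ n) := by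
        have : 0 ≤ √2 ^ n * π ^ 4 * (A + s) := by positivity
        nlinarith
    _ ≤ 4 * π ^ 2 * (A + s) * W * π ^ 2 := by
        rw [show 4 * π ^ 2 * (A + s) * W * π ^ 2 = 4 * π ^ 4 * (A + s) * W by ring]
        gcongr

theorem stmt0 (N N' L d n m : ℕ) (hL : 1 ≤ L) (hN'₁ : 1 ≤ N')
    (hN'₂ : (N' : ℝ) ≤ (N : ℝ) / 2 + (L : ℝ))
    (M lam : ℝ) (hM : 0 < M) (hlam : 0 < lam)
    (lams : Fin N' → ℝ) (hlams : ∀ i, lam ≤ lams i)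
    (k : Fin N' → EuclideanSpace ℝ (Fin 4))
    (p : Fin m → EuclideanSpace ℝ (Fin 4)) :
    (∫ ℓ : EuclideanSpace ℝ (Fin 4),
        Real.exp (-‖ℓ‖ ^ 2 / lam ^ 2) *
          (∏ i, Real.exp (-‖k i + ℓ‖ ^ 2 / (alphaWeight (N + 2) (L - 1) * lams i ^ 2))) *
          logPlus (max (tupleNormM M (Fin.snoc p ℓ) / sInf (Set.range lams))
              (sSup (Set.range lams) / M)) ^ n *
          ∑ μ ∈ Finset.range (d + 1),
            (1 / Real.sqrt (Nat.factorial μ)) * (tupleNorm (Fin.snoc p ℓ) / M) ^ μ) /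
        (2 * Real.pi) ^ 4
      ≤ 4 * Real.pi ^ 2 * lam ^ 4 *
          (∏ i, Real.exp (-‖k i‖ ^ 2 / (alphaWeight N L * lams i ^ 2))) *
          (logPlus (max (tupleNormM M p / sInf (Set.range lams))
              (sSup (Set.range lams) / M)) ^ n + Real.sqrt (Nat.factorial n)) *
          ((N' : ℝ) + 1) ^ (((n : ℝ) + 4) / 2) * 2 ^ d * max 1 (lam / M) ^ d *
          ∑ μ ∈ Finset.range (d + 1),
            (1 / Real.sqrt (Nat.factorial μ)) * (tupleNorm p / M) ^ μ := by
  have : Nonempty (Fin N') := ⟨⟨0, hN'₁⟩⟩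
  have hlo : lam ≤ sInf (Set.range lams) :=
    le_csInf (Set.range_nonempty lams) (Set.forall_mem_range.2 hlams)
  set G := ∏ i, exp (-‖k i‖ ^ 2 / (alphaWeight N L * lams i ^ 2))
  set A := logPlus (max (tupleNormM M p / sInf (Set.range lams)) (sSup (Set.range lams) / M)) ^ n
  set S := ∑ μ ∈ Finset.range (d + 1), 1 / √(μ ! : ℝ) * (tupleNorm p / M) ^ μ
  have hA : 0 ≤ A := pow_nonneg (logPlus_nonneg _) n
  have hS : 0 ≤ S := sqrtExpSum_nonneg d (div_nonneg (tupleNorm_nonneg p) hM.le)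
  calc _ ≤ G * (√2 ^ n * (A + exp 4 * √(n ! : ℝ))) * (2 ^ (d + 1) * max 1 (lam / M) ^ d * S) *
          (π / (1 / (8 * lam ^ 2))) ^ 2 / (2 * π) ^ 4 := by
        gcongr
        exact integral_le_of_le_mul_gaussian
          (fun ℓ => integrand_nonneg hM (sInf (Set.range lams)) _ k p ℓ) (by positivity)
          (integrand_le hL hN'₂ hM hlam hlo _ hlams k p)
    _ = G * 2 ^ d * max 1 (lam / M) ^ d * S * lam ^ 4 *
          (√2 ^ n * (A + exp 4 * √(n ! : ℝ)) * 8 / π ^ 2) := by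
        field_simp; ring
    _ ≤ G * 2 ^ d * max 1 (lam / M) ^ d * S * lam ^ 4 *
          (4 * π ^ 2 * (A + √(n ! : ℝ)) * ((N' : ℝ) + 1) ^ (((n : ℝ) + 4) / 2)) := by
        gcongr
        exact sqrt_two_pow_mul_add_exp_four_le hA (sqrt_nonneg _)
          (four_mul_sqrt_two_pow_le_rpow hN'₁ n)
    _ = _ := by ring
end

section
/- Let θ ≥ 1 be an integer, n ∈ ℕ, and let M, c, a, Λ₀ be reals with M > 0, c ≥ M and 0 < a ≤ Λ₀. Then ∫_a^{Λ₀} λ^{−θ−1} ( log max( c/λ, λ/M ) )ⁿ dλ ≤ a^{−θ} · Σ_{m=0}^{n} (2·n!/(n−m)!) · ( log max( c/a, a/M ) )^{n−m}. -/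
/-!
Expand `log max(c/t, t/M) ≤ log(t/a) + log max(c/a, a/M)` binomially; this reduces the claim to the
log-moments `I_m = ∫_a^Λ t^{-(θ+1)} log(t/a)^m dt`. Integrating by parts against `-1/(θ t^θ)` gives
`I_{m+1} ≤ (m+1)/θ · I_m`, whence `I_m ≤ m! / (θ^{m+1} a^θ)`.
-/

open MeasureTheory Real intervalIntegral Set Finset Nat

section LogMoments

variable {θ : ℕ} {a Λ t : ℝ}

lemma hasDerivAt_neg_one_div_mul_pow (hθ : θ ≠ 0) (ht : t ≠ 0) :
    HasDerivAt (fun t : ℝ => -1 / (θ * t ^ θ)) (1 / t ^ (θ + 1)) t := by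
  obtain ⟨k, rfl⟩ := exists_eq_succ_of_ne_zero hθ
  simp only [neg_div, one_div]
  refine (((hasDerivAt_pow (k + 1) t).const_mul ((k + 1 : ℕ) : ℝ)).fun_inv
    (by positivity)).fun_neg.congr_deriv ?_
  simp only [succ_eq_add_one, add_tsub_cancel_right]
  field_simp
  ring

lemma hasDerivAt_log_div_pow_succ (m : ℕ) (ha : a ≠ 0) (ht : t ≠ 0) :
    HasDerivAt (fun t : ℝ => log (t / a) ^ (m + 1)) ((m + 1) * log (t / a) ^ m / t) t := by
  refine ((((hasDerivAt_id t).div_const a).log (div_ne_zero ht ha)).fun_pow (m + 1)).congr_deriv ?_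
  simp only [id, cast_succ, add_tsub_cancel_right]
  field_simp

lemma continuousOn_one_div_pow_mul_log_div_pow (m : ℕ) (ha : a ≠ 0) :
    ContinuousOn (fun t : ℝ => 1 / t ^ (θ + 1) * log (t / a) ^ m) (Ioi 0) := by
  intro t ht
  have ht : t ≠ 0 := ht.ne'
  fun_prop (disch := simp [*])

variable (θ) in
lemma intervalIntegrable_one_div_pow_mul_log_div_pow (m : ℕ) (ha : 0 < a) (haΛ : a ≤ Λ) :
    IntervalIntegrable (fun t : ℝ => 1 / t ^ (θ + 1) * log (t / a) ^ m) volume a Λ :=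
  ((continuousOn_one_div_pow_mul_log_div_pow m ha.ne').mono fun _ ht =>
    ha.trans_le (uIcc_of_le haΛ ▸ ht).1).intervalIntegrable

lemma integral_one_div_pow_succ (hθ : θ ≠ 0) (ha : 0 < a) (haΛ : a ≤ Λ) :
    ∫ t in a..Λ, 1 / t ^ (θ + 1) = 1 / (θ * a ^ θ) - 1 / (θ * Λ ^ θ) := by
  rw [integral_eq_sub_of_hasDerivAt
    (fun t ht => hasDerivAt_neg_one_div_mul_pow hθ (ha.trans_le (uIcc_of_le haΛ ▸ ht).1).ne')
    (by simpa using intervalIntegrable_one_div_pow_mul_log_div_pow θ 0 ha haΛ)]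
  ring

lemma integral_one_div_pow_mul_log_div_pow_succ (hθ : θ ≠ 0) (ha : 0 < a) (haΛ : a ≤ Λ)
    (m : ℕ) :
    ∫ t in a..Λ, 1 / t ^ (θ + 1) * log (t / a) ^ (m + 1) =
      (m + 1) / θ * (∫ t in a..Λ, 1 / t ^ (θ + 1) * log (t / a) ^ m)
        - log (Λ / a) ^ (m + 1) / (θ * Λ ^ θ) := by
  have hpos : ∀ t ∈ uIcc a Λ, 0 < t := fun t ht => ha.trans_le (uIcc_of_le haΛ ▸ ht).1
  have hparts := integral_mul_deriv_eq_deriv_mul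
    (fun t ht => hasDerivAt_log_div_pow_succ m ha.ne' (hpos t ht).ne')
    (fun t ht => hasDerivAt_neg_one_div_mul_pow hθ (hpos t ht).ne')
    (ContinuousOn.intervalIntegrable fun t ht => by
      have := (hpos t ht).ne'
      exact ContinuousAt.continuousWithinAt (by fun_prop (disch := simp [*])))
    (by simpa using intervalIntegrable_one_div_pow_mul_log_div_pow θ 0 ha haΛ)
  have hu'v : ∫ t in a..Λ, (m + 1) * log (t / a) ^ m / t * (-1 / (θ * t ^ θ)) =
      -((m + 1) / θ * ∫ t in a..Λ, 1 / t ^ (θ + 1) * log (t / a) ^ m) := by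
    rw [← intervalIntegral.integral_const_mul, ← intervalIntegral.integral_neg]
    refine integral_congr fun t ht => ?_
    have := (hpos t ht).ne'
    field_simp
    ring
  simp only [mul_comm (log (_ / a) ^ (m + 1)), hu'v, div_self ha.ne', log_one] at hparts
  rw [hparts, zero_pow (succ_ne_zero m)]
  ring

lemma integral_one_div_pow_mul_log_div_pow_le (hθ : θ ≠ 0) (ha : 0 < a) (haΛ : a ≤ Λ)
    (m : ℕ) :
    ∫ t in a..Λ, 1 / t ^ (θ + 1) * log (t / a) ^ m ≤ m ! / (θ ^ (m + 1) * a ^ θ) := by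
  have hΛ : 0 < Λ := ha.trans_le haΛ
  induction m with
  | zero =>
    simp only [pow_zero, mul_one, integral_one_div_pow_succ hθ ha haΛ, factorial_zero,
      cast_one, zero_add, pow_one]
    exact sub_le_self _ (by positivity)
  | succ m ih =>
    have hlog : 0 ≤ log (Λ / a) := log_nonneg ((one_le_div ha).2 haΛ)
    calc ∫ t in a..Λ, 1 / t ^ (θ + 1) * log (t / a) ^ (m + 1)
        ≤ (m + 1) / θ * ∫ t in a..Λ, 1 / t ^ (θ + 1) * log (t / a) ^ m := by
          rw [integral_one_div_pow_mul_log_div_pow_succ hθ ha haΛ]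
          exact sub_le_self _ (by positivity)
      _ ≤ (m + 1) / θ * (m ! / (θ ^ (m + 1) * a ^ θ)) := by gcongr
      _ = (m + 1)! / (θ ^ (m + 1 + 1) * a ^ θ) := by
          rw [factorial_succ]
          push_cast
          field_simp
          ring

variable (θ) in
lemma integrableOn_Ioo_one_div_pow_mul_log_div_pow (m : ℕ) (ha : 0 < a) (haΛ : a ≤ Λ) :
    IntegrableOn (fun t : ℝ => 1 / t ^ (θ + 1) * log (t / a) ^ m) (Ioo a Λ) :=
  (intervalIntegrable_one_div_pow_mul_log_div_pow θ m ha haΛ).1.mono_set Ioo_subset_Ioc_self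

lemma setIntegral_Ioo_one_div_pow_mul_log_div_pow_le (hθ : 1 ≤ θ) (ha : 0 < a) (haΛ : a ≤ Λ)
    (m : ℕ) : ∫ t in Ioo a Λ, 1 / t ^ (θ + 1) * log (t / a) ^ m ≤ m ! / a ^ θ := by
  rw [← integral_Ioc_eq_integral_Ioo, ← intervalIntegral.integral_of_le haΛ]
  refine (integral_one_div_pow_mul_log_div_pow_le (by omega) ha haΛ m).trans ?_
  gcongr
  exact le_mul_of_one_le_left (by positivity) (one_le_pow₀ (by exact_mod_cast hθ))

end LogMoments

section MaxRatio

variable {M c a t : ℝ}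

lemma one_le_max_div_div (hM : 0 < M) (hc : M ≤ c) (ht : 0 < t) : 1 ≤ max (c / t) (t / M) := by
  rcases le_total t M with htM | hMt
  · exact le_max_of_le_left ((one_le_div ht).2 (htM.trans hc))
  · exact le_max_of_le_right ((one_le_div hM).2 hMt)

lemma max_div_div_le_mul_div (hc : 0 ≤ c) (ha : 0 < a) (hat : a ≤ t) :
    max (c / t) (t / M) ≤ max (c / a) (a / M) * (t / a) := by
  have hta : 1 ≤ t / a := (one_le_div ha).2 hat
  refine max_le ?_ ?_
  · calc c / t ≤ c / a := div_le_div_of_nonneg_left hc ha hat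
      _ ≤ max (c / a) (a / M) := le_max_left _ _
      _ ≤ max (c / a) (a / M) * (t / a) :=
        le_mul_of_one_le_right ((div_nonneg hc ha.le).trans (le_max_left _ _)) hta
  · calc t / M = a / M * (t / a) := by field_simp
      _ ≤ max (c / a) (a / M) * (t / a) := by gcongr; exact le_max_right _ _

lemma log_max_div_div_le (hM : 0 < M) (hc : M ≤ c) (ha : 0 < a) (hat : a ≤ t) :
    log (max (c / t) (t / M)) ≤ log (t / a) + log (max (c / a) (a / M)) := by
  have hmax : 0 < max (c / a) (a / M) := one_pos.trans_le (one_le_max_div_div hM hc ha)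
  rw [add_comm, ← log_mul hmax.ne' (div_pos (ha.trans_le hat) ha).ne']
  exact log_le_log (one_pos.trans_le (one_le_max_div_div hM hc (ha.trans_le hat)))
    (max_div_div_le_mul_div (hM.le.trans hc) ha hat)

lemma one_div_pow_mul_log_max_div_div_pow_le_sum (θ n : ℕ) (hM : 0 < M) (hc : M ≤ c)
    (ha : 0 < a) (hat : a ≤ t) :
    1 / t ^ (θ + 1) * log (max (c / t) (t / M)) ^ n ≤
      ∑ m ∈ range (n + 1), (n.choose m * log (max (c / a) (a / M)) ^ (n - m)) *
        (1 / t ^ (θ + 1) * log (t / a) ^ m) := by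
  have ht : 0 < t := ha.trans_le hat
  calc 1 / t ^ (θ + 1) * log (max (c / t) (t / M)) ^ n
      ≤ 1 / t ^ (θ + 1) * (log (t / a) + log (max (c / a) (a / M))) ^ n := by
        gcongr
        · exact log_nonneg (one_le_max_div_div hM hc ht)
        · exact log_max_div_div_le hM hc ha hat
    _ = _ := by
        rw [add_pow, mul_sum]
        exact sum_congr rfl fun m _ => by ring

end MaxRatio

lemma cast_choose_mul_factorial {K : Type*} [DivisionRing K] [CharZero K] {n m : ℕ}
    (hmn : m ≤ n) : (n.choose m : K) * m ! = n ! / (n - m)! := by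
  rw [eq_div_iff (by exact_mod_cast (n - m).factorial_ne_zero)]
  exact_mod_cast choose_mul_factorial_mul_factorial hmn

lemma setIntegral_Ioo_one_div_pow_mul_log_max_div_div_pow_le (θ n : ℕ) {M c a Λ : ℝ}
    (hM : 0 < M) (hc : M ≤ c) (ha : 0 < a) (haΛ : a ≤ Λ) :
    ∫ t in Ioo a Λ, 1 / t ^ (θ + 1) * log (max (c / t) (t / M)) ^ n ≤
      ∑ m ∈ range (n + 1), (n.choose m * log (max (c / a) (a / M)) ^ (n - m)) *
        ∫ t in Ioo a Λ, 1 / t ^ (θ + 1) * log (t / a) ^ m := by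
  have hint : ∀ m, IntegrableOn (fun t : ℝ => 1 / t ^ (θ + 1) * log (t / a) ^ m) (Ioo a Λ) :=
    fun m => integrableOn_Ioo_one_div_pow_mul_log_div_pow θ m ha haΛ
  simp only [← MeasureTheory.integral_const_mul]
  rw [← integral_finsetSum _ fun m _ => (hint m).const_mul _]
  refine integral_mono_of_nonneg ((ae_restrict_iff' measurableSet_Ioo).2 (.of_forall ?_))
    (integrable_finsetSum _ fun m _ => (hint m).const_mul _)
    ((ae_restrict_iff' measurableSet_Ioo).2 (.of_forall fun t ht =>
      one_div_pow_mul_log_max_div_div_pow_le_sum θ n hM hc ha ht.1.le))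
  intro t ⟨hat, _⟩
  have ht : 0 < t := ha.trans hat
  have := log_nonneg (one_le_max_div_div hM hc ht)
  positivity

theorem stmt4 (θ n : ℕ) (hθ : 1 ≤ θ) (M c a Λ₀ : ℝ)
    (hM : 0 < M) (hc : M ≤ c) (ha : 0 < a) (haΛ : a ≤ Λ₀) :
    (∫ t in Set.Ioo a Λ₀, (1 / t ^ (θ + 1)) * Real.log (max (c / t) (t / M)) ^ n)
      ≤ (1 / a ^ θ) *
        ∑ m ∈ Finset.range (n + 1),
          (2 * (Nat.factorial n : ℝ) / (Nat.factorial (n - m) : ℝ)) *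
            Real.log (max (c / a) (a / M)) ^ (n - m) := by
  set A := log (max (c / a) (a / M))
  have hA : 0 ≤ A := log_nonneg (one_le_max_div_div hM hc ha)
  calc _ ≤ ∑ m ∈ range (n + 1), (n.choose m * A ^ (n - m)) *
          ∫ t in Ioo a Λ₀, 1 / t ^ (θ + 1) * log (t / a) ^ m :=
        setIntegral_Ioo_one_div_pow_mul_log_max_div_div_pow_le θ n hM hc ha haΛ
    _ ≤ ∑ m ∈ range (n + 1), (n.choose m * A ^ (n - m)) * (m ! / a ^ θ) := by
        gcongr with m
        exact setIntegral_Ioo_one_div_pow_mul_log_div_pow_le hθ ha haΛ m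
    _ = 1 / a ^ θ * ∑ m ∈ range (n + 1), (n ! / (n - m)! : ℝ) * A ^ (n - m) := by
        rw [mul_sum]
        refine sum_congr rfl fun m hm => ?_
        rw [← cast_choose_mul_factorial (Nat.lt_succ_iff.mp (mem_range.mp hm))]
        ring
    _ ≤ _ := by
        gcongr with m
        exact le_mul_of_one_le_left (by positivity) one_le_two
end

section
/- For all reals a, c with 0 < a ≤ c and every n ∈ ℕ, ∫_0^a ( log(c/λ) )ⁿ dλ = a · n! · Σ_{m=0}^{n} ( log(c/a) )^m / m!. -/
/-!
Let `L(t) = log(c/t)` and `F_n(t) = t · n! · ∑_{m ≤ n} L(t)^m / m!`. Then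
`F_{n+1} = (n+1) F_n + t L^{n+1}` and `(t L^{n+1})' = L^{n+1} - (n+1) L^n`, so by induction
`F_n' = L^n` on `t ≠ 0`. Since `t L(t)^m → 0` as `t → 0⁺`, `F_n` is continuous on `[0, ∞)` with
`F_n 0 = 0`; the integrand is nonnegative on `(0, c]`, hence integrable, and the fundamental
theorem of calculus gives `∫₀ᵃ L^n = F_n a`.
-/

open MeasureTheory Real Filter Topology Finset Nat

namespace Real

theorem hasDerivAt_log_div {c x : ℝ} (hc : c ≠ 0) (hx : x ≠ 0) :
    HasDerivAt (fun t => log (c / t)) (-x⁻¹) x := by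
  refine ((hasDerivAt_log hx).const_sub (log c)).congr_of_eventuallyEq ?_
  filter_upwards [isOpen_ne.mem_nhds hx] with t ht
  rw [log_div hc ht]

theorem tendsto_mul_log_div_pow_nhdsGT_zero {c : ℝ} (hc : 0 < c) (m : ℕ) :
    Tendsto (fun t => t * log (c / t) ^ m) (𝓝[>] 0) (𝓝 0) := by
  have hlog : Tendsto (fun x => log x ^ m / (1 * x + 0)) atTop (𝓝 0) :=
    tendsto_pow_log_div_mul_add_atTop 1 0 m one_ne_zero
  have hdiv : Tendsto (fun t => c / t) (𝓝[>] 0) atTop := by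
    simpa only [div_eq_mul_inv] using tendsto_inv_nhdsGT_zero.const_mul_atTop hc
  have h := (hlog.comp hdiv).const_mul c
  rw [mul_zero] at h
  refine h.congr' ?_
  filter_upwards [self_mem_nhdsWithin] with t (ht : 0 < t)
  simp only [Function.comp]
  field_simp
  ring

noncomputable def logDivPowPrimitive (c : ℝ) (n : ℕ) (t : ℝ) : ℝ :=
  t * ∑ m ∈ range (n + 1), ((n ! : ℝ) / m !) * log (c / t) ^ m

@[simp]
theorem logDivPowPrimitive_zero_right (c : ℝ) (n : ℕ) : logDivPowPrimitive c n 0 = 0 := by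
  simp [logDivPowPrimitive]

theorem logDivPowPrimitive_succ (c : ℝ) (n : ℕ) (t : ℝ) :
    logDivPowPrimitive c (n + 1) t
      = (n + 1) * logDivPowPrimitive c n t + t * log (c / t) ^ (n + 1) := by
  have hcoeff : ∀ m, ((n + 1)! : ℝ) / m ! = (n + 1) * ((n ! : ℝ) / m !) := fun m => by
    push_cast [Nat.factorial_succ]
    ring
  have hsum : ∑ m ∈ range (n + 1), ((n + 1)! : ℝ) / m ! * log (c / t) ^ m
      = (n + 1) * ∑ m ∈ range (n + 1), (n ! : ℝ) / m ! * log (c / t) ^ m := by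
    rw [mul_sum]
    exact sum_congr rfl fun m _ => by rw [hcoeff, mul_assoc]
  rw [logDivPowPrimitive, logDivPowPrimitive, sum_range_succ, hsum, div_self (by positivity)]
  ring

theorem hasDerivAt_logDivPowPrimitive {c x : ℝ} (hc : c ≠ 0) (hx : x ≠ 0) (n : ℕ) :
    HasDerivAt (logDivPowPrimitive c n) (log (c / x) ^ n) x := by
  induction n with
  | zero =>
    show HasDerivAt (fun t => logDivPowPrimitive c 0 t) _ x
    simpa [logDivPowPrimitive] using hasDerivAt_id' x
  | succ n ih =>
    have hpow : HasDerivAt (fun t => t * log (c / t) ^ (n + 1))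
        (1 * log (c / x) ^ (n + 1) + x * ((n + 1 : ℕ) * log (c / x) ^ n * -x⁻¹)) x := by
      simpa [Pi.mul_def, Pi.pow_def] using
        (hasDerivAt_id x).mul ((hasDerivAt_log_div hc hx).pow (n + 1))
    refine (((ih.const_mul ((n : ℝ) + 1)).add hpow).congr_deriv ?_).congr_of_eventuallyEq
      (Eventually.of_forall fun t => logDivPowPrimitive_succ c n t)
    have hxx : x * x⁻¹ = 1 := mul_inv_cancel₀ hx
    push_cast
    linear_combination (-((n : ℝ) + 1)) * log (c / x) ^ n * hxx

theorem continuousOn_logDivPowPrimitive {c : ℝ} (hc : 0 < c) (n : ℕ) :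
    ContinuousOn (logDivPowPrimitive c n) (Set.Ici 0) := by
  intro x (hx : 0 ≤ x)
  rcases hx.eq_or_lt with rfl | hx
  · rw [← continuousWithinAt_Ioi_iff_Ici, ContinuousWithinAt, logDivPowPrimitive_zero_right]
    have h := tendsto_finsetSum (range (n + 1)) fun m _ =>
      (tendsto_mul_log_div_pow_nhdsGT_zero hc m).const_mul ((n ! : ℝ) / m !)
    simp only [mul_zero, sum_const_zero] at h
    refine h.congr fun t => ?_
    simp only [logDivPowPrimitive, mul_sum]
    exact sum_congr rfl fun m _ => by ring
  · exact (hasDerivAt_logDivPowPrimitive hc.ne' hx.ne' n).continuousAt.continuousWithinAt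

theorem integral_Ioo_log_div_pow {a c : ℝ} (ha : 0 < a) (hac : a ≤ c) (n : ℕ) :
    ∫ t in Set.Ioo 0 a, log (c / t) ^ n = logDivPowPrimitive c n a := by
  have hc : 0 < c := ha.trans_le hac
  have hcont : ContinuousOn (logDivPowPrimitive c n) (Set.Icc 0 a) :=
    (continuousOn_logDivPowPrimitive hc n).mono Set.Icc_subset_Ici_self
  have hderiv : ∀ x ∈ Set.Ioo 0 a, HasDerivAt (logDivPowPrimitive c n) (log (c / x) ^ n) x :=
    fun x hx => hasDerivAt_logDivPowPrimitive hc.ne' hx.1.ne' n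
  have hnonneg : ∀ x ∈ Set.Ioo 0 a, 0 ≤ log (c / x) ^ n := fun x hx =>
    pow_nonneg (log_nonneg ((one_le_div hx.1).mpr (hx.2.le.trans hac))) n
  have hint : IntervalIntegrable (fun t => log (c / t) ^ n) volume 0 a :=
    (intervalIntegrable_iff_integrableOn_Ioc_of_le ha.le).mpr
      (intervalIntegral.integrableOn_deriv_of_nonneg hcont hderiv hnonneg)
  rw [← integral_Ioc_eq_integral_Ioo, ← intervalIntegral.integral_of_le ha.le,
    intervalIntegral.integral_eq_sub_of_hasDerivAt_of_le ha.le hcont hderiv hint,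
    logDivPowPrimitive_zero_right, sub_zero]

end Real

theorem stmt5 (a c : ℝ) (n : ℕ) (ha : 0 < a) (hac : a ≤ c) :
    (∫ t in Set.Ioo (0 : ℝ) a, Real.log (c / t) ^ n)
      = a * (Nat.factorial n : ℝ) *
        ∑ m ∈ Finset.range (n + 1), Real.log (c / a) ^ m / (Nat.factorial m : ℝ) := by
  rw [integral_Ioo_log_div_pow ha hac, logDivPowPrimitive, mul_assoc]
  congr 1
  rw [mul_sum]
  exact sum_congr rfl fun m _ => by ring
end

section
/- Let n ≥ 1 be a natural number, let Λ, Λ₀ be reals with 0 ≤ Λ ≤ Λ₀, and let F : ℝⁿ → [0,∞] be measurable. Then ∫_Λ^{Λ₀} λ · ( ∫_{[λ,Λ₀]ⁿ} F(λ₁,…,λₙ) dλ₁⋯dλₙ ) dλ ≤ ∫_{[Λ,Λ₀]ⁿ} ( min_{1≤i≤n} λᵢ )² · F(λ₁,…,λₙ) dλ₁⋯dλₙ. -/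
/-!
By Tonelli, the left-hand side is the integral of `t * F x` over the region
`Λ ≤ t ≤ Λ₀, t ≤ xᵢ ≤ Λ₀`, which is also the region `x ∈ [Λ, Λ₀]ⁿ, Λ ≤ t ≤ min x`.
Integrating in `t` first, `∫_Λ^{min x} t dt ≤ min x * (min x - Λ) ≤ (min x)²` since `Λ ≥ 0`.
-/

open MeasureTheory Set Function
open scoped ENNReal

section
variable {α β : Type*} [MeasurableSpace α] [MeasurableSpace β] {μ : Measure α} {ν : Measure β}

theorem setLIntegral_setLIntegral_eq_lintegral_lintegral_indicator
    {s : Set α} {t : α → Set β} {R : Set (α × β)} (hs : MeasurableSet s) (hR : MeasurableSet R)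
    (hmem : ∀ a b, (a, b) ∈ R ↔ a ∈ s ∧ b ∈ t a) (f : α → β → ℝ≥0∞) :
    ∫⁻ a in s, ∫⁻ b in t a, f a b ∂ν ∂μ = ∫⁻ a, ∫⁻ b, R.indicator (uncurry f) (a, b) ∂ν ∂μ := by
  rw [← lintegral_indicator hs]
  congr 1 with a
  by_cases ha : a ∈ s
  · have hslice : t a = Prod.mk a ⁻¹' R := by ext b; simp [hmem, ha]
    rw [indicator_of_mem ha, hslice, ← lintegral_indicator (measurable_prodMk_left hR)]
    rfl
  · have hzero : ∀ b, R.indicator (uncurry f) (a, b) = 0 := fun b =>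
      indicator_of_notMem (fun h => ha ((hmem a b).1 h).1) _
    simp [indicator_of_notMem ha, hzero]

theorem setLIntegral_setLIntegral_swap [SFinite μ] [SFinite ν]
    {s : Set α} {t : α → Set β} {s' : Set β} {t' : β → Set α}
    (hs : MeasurableSet s) (hs' : MeasurableSet s')
    (hR : MeasurableSet {p : α × β | p.1 ∈ s ∧ p.2 ∈ t p.1})
    (hst : ∀ a b, a ∈ s ∧ b ∈ t a ↔ b ∈ s' ∧ a ∈ t' b)
    {f : α → β → ℝ≥0∞} (hf : Measurable (uncurry f)) :
    ∫⁻ a in s, ∫⁻ b in t a, f a b ∂ν ∂μ = ∫⁻ b in s', ∫⁻ a in t' b, f a b ∂μ ∂ν := by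
  rw [setLIntegral_setLIntegral_eq_lintegral_lintegral_indicator hs hR (fun _ _ => Iff.rfl),
    setLIntegral_setLIntegral_eq_lintegral_lintegral_indicator (t := t') (f := fun b a => f a b)
      hs' (hR.preimage measurable_swap) (fun b a => hst a b)]
  exact lintegral_lintegral_swap (hf.indicator hR).aemeasurable

end

theorem mem_Icc_and_mem_pi_Icc_iff {ι α : Type*} [Finite ι] [Nonempty ι]
    [ConditionallyCompleteLinearOrder α] {a b t : α} {x : ι → α} :
    t ∈ Icc a b ∧ x ∈ univ.pi (fun _ => Icc t b) ↔
      x ∈ univ.pi (fun _ => Icc a b) ∧ t ∈ Icc a (⨅ i, x i) := by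
  simp only [mem_univ_pi, mem_Icc, le_ciInf_iff (Finite.bddBelow_range x)]
  constructor
  · rintro ⟨⟨hat, -⟩, hx⟩
    exact ⟨fun i => ⟨hat.trans (hx i).1, (hx i).2⟩, hat, fun i => (hx i).1⟩
  · rintro ⟨hx, hat, htx⟩
    obtain ⟨i⟩ := ‹Nonempty ι›
    exact ⟨⟨hat, (htx i).trans (hx i).2⟩, fun i => ⟨htx i, (hx i).2⟩⟩

theorem measurableSet_setOf_mem_Icc_and_mem_pi_Icc {ι : Type*} [Countable ι] (a b : ℝ) :
    MeasurableSet {p : ℝ × (ι → ℝ) | p.1 ∈ Icc a b ∧ p.2 ∈ univ.pi (fun _ => Icc p.1 b)} := by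
  simp only [mem_Icc, mem_univ_pi, ofPred_and, ofPred_forall]
  measurability

theorem setLIntegral_Icc_ofReal_le_sq {a b : ℝ} (ha : 0 ≤ a) :
    ∫⁻ t in Icc a b, ENNReal.ofReal t ≤ ENNReal.ofReal b ^ 2 :=
  calc ∫⁻ t in Icc a b, ENNReal.ofReal t
      ≤ ∫⁻ _ in Icc a b, ENNReal.ofReal b := setLIntegral_mono measurable_const
        fun _ ht => ENNReal.ofReal_le_ofReal ht.2
    _ = ENNReal.ofReal b * ENNReal.ofReal (b - a) := by rw [setLIntegral_const, Real.volume_Icc]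
    _ ≤ ENNReal.ofReal b ^ 2 := by rw [sq]; gcongr; linarith

theorem stmt9_general (n : ℕ) (hn : 1 ≤ n) (Λ Λ₀ : ℝ) (h0 : 0 ≤ Λ)
    (F : (Fin n → ℝ) → ENNReal) (hF : Measurable F) :
    (∫⁻ t in Set.Icc Λ Λ₀,
        ENNReal.ofReal t *
          ∫⁻ x in Set.univ.pi (fun _ : Fin n => Set.Icc t Λ₀), F x)
      ≤ ∫⁻ x in Set.univ.pi (fun _ : Fin n => Set.Icc Λ Λ₀),
          ENNReal.ofReal (sInf (Set.range x)) ^ 2 * F x := by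
  have : Nonempty (Fin n) := Fin.pos_iff_nonempty.mp hn
  calc (∫⁻ t in Icc Λ Λ₀, ENNReal.ofReal t * ∫⁻ x in univ.pi (fun _ => Icc t Λ₀), F x)
      = ∫⁻ t in Icc Λ Λ₀, ∫⁻ x in univ.pi (fun _ => Icc t Λ₀), ENNReal.ofReal t * F x := by
        simp only [lintegral_const_mul _ hF]
    _ = ∫⁻ x in univ.pi (fun _ => Icc Λ Λ₀), ∫⁻ t in Icc Λ (⨅ i, x i), ENNReal.ofReal t * F x :=
        setLIntegral_setLIntegral_swap measurableSet_Icc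
          (MeasurableSet.univ_pi fun _ => measurableSet_Icc)
          (measurableSet_setOf_mem_Icc_and_mem_pi_Icc Λ Λ₀)
          (fun _ _ => mem_Icc_and_mem_pi_Icc_iff)
          ((ENNReal.measurable_ofReal.comp measurable_fst).mul (hF.comp measurable_snd))
    _ = ∫⁻ x in univ.pi (fun _ => Icc Λ Λ₀),
          (∫⁻ t in Icc Λ (⨅ i, x i), ENNReal.ofReal t) * F x := by
        simp only [lintegral_mul_const _ ENNReal.measurable_ofReal]
    _ ≤ ∫⁻ x in univ.pi (fun _ => Icc Λ Λ₀), ENNReal.ofReal (sInf (range x)) ^ 2 * F x :=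
        lintegral_mono fun x => mul_le_mul_left (setLIntegral_Icc_ofReal_le_sq h0) _

theorem stmt9 (n : ℕ) (hn : 1 ≤ n) (Λ Λ₀ : ℝ) (h0 : 0 ≤ Λ) (hΛ : Λ ≤ Λ₀)
    (F : (Fin n → ℝ) → ENNReal) (hF : Measurable F) :
    (∫⁻ t in Set.Icc Λ Λ₀,
        ENNReal.ofReal t *
          ∫⁻ x in Set.univ.pi (fun _ : Fin n => Set.Icc t Λ₀), F x)
      ≤ ∫⁻ x in Set.univ.pi (fun _ : Fin n => Set.Icc Λ Λ₀),
          ENNReal.ofReal (sInf (Set.range x)) ^ 2 * F x :=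
  stmt9_general n hn Λ Λ₀ h0 F hF
end

section
/- Let s ≥ 1 be a real number, n ∈ ℕ, M > 0, and let a, Λ₀ be reals with 0 < a ≤ Λ₀. Then ∫_{max(a,M)}^{Λ₀} λ^{−s−1} ( log(λ/M) )ⁿ dλ ≤ a^{−s} · Σ_{j=0}^{n} ( n! / (j! · s^{n−j+1}) ) · ( log₊(a/M) )^j, where the integral is understood as the Lebesgue integral over the set of λ with max(a,M) < λ < Λ₀ (equal to 0 if this set is empty). -/
/-! Substituting `t = M eᵘ` turns the integral into `M^{-s} ∫ e^{-su} uⁿ du`, a piece of an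
incomplete Gamma function. Its primitive is `-t^{-s} P(log (t/M))` with
`P(L) = Σ_{j ≤ n} n! / (j! s^{n-j+1}) Lʲ`, because the coefficients satisfy
`(j+1) c_{j+1} = s c_j` and `s c_n = 1`, so that `s P - P' = Lⁿ`. The primitive is negative
at the upper end, so the integral is at most its value `(max a M)^{-s} P(log₊ (a/M))` at the
lower end, and `(max a M)^{-s} ≤ a^{-s}`. -/

open MeasureTheory Real

open Finset Nat

noncomputable def incGammaCoeff (s : ℝ) (n j : ℕ) : ℝ :=
  (n ! : ℝ) / ((j ! : ℝ) * s ^ (n - j + 1))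

noncomputable def incGammaPoly (s : ℝ) (n : ℕ) (L : ℝ) : ℝ :=
  ∑ j ∈ range (n + 1), incGammaCoeff s n j * L ^ j

lemma incGammaCoeff_nonneg {s : ℝ} (hs : 0 ≤ s) (n j : ℕ) : 0 ≤ incGammaCoeff s n j := by
  unfold incGammaCoeff; positivity

lemma succ_mul_incGammaCoeff_succ {s : ℝ} {n j : ℕ} (hj : j < n) :
    (j + 1 : ℝ) * incGammaCoeff s n (j + 1) = s * incGammaCoeff s n j := by
  obtain ⟨k, rfl⟩ := Nat.exists_eq_add_of_lt hj
  have h₁ : j + k + 1 - j + 1 = k + 2 := by omega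
  have h₂ : j + k + 1 - (j + 1) + 1 = k + 1 := by omega
  unfold incGammaCoeff
  rw [h₁, h₂, factorial_succ j]
  push_cast
  by_cases hs : s = 0
  · simp [hs]
  · field_simp
    ring

lemma mul_incGammaCoeff_self {s : ℝ} (hs : s ≠ 0) (n : ℕ) : s * incGammaCoeff s n n = 1 := by
  unfold incGammaCoeff
  have : (n ! : ℝ) ≠ 0 := mod_cast n.factorial_ne_zero
  field_simp
  simp

lemma incGammaPoly_nonneg {s : ℝ} (hs : 0 ≤ s) (n : ℕ) {L : ℝ} (hL : 0 ≤ L) :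
    0 ≤ incGammaPoly s n L :=
  sum_nonneg fun j _ => mul_nonneg (incGammaCoeff_nonneg hs n j) (pow_nonneg hL j)

lemma hasDerivAt_incGammaPoly (s : ℝ) (n : ℕ) (L : ℝ) :
    HasDerivAt (incGammaPoly s n)
      (∑ j ∈ range (n + 1), incGammaCoeff s n j * (j * L ^ (j - 1))) L :=
  HasDerivAt.fun_sum fun j _ => (hasDerivAt_pow j L).const_mul (incGammaCoeff s n j)

lemma mul_incGammaPoly_sub_deriv {s : ℝ} (hs : s ≠ 0) (n : ℕ) (L : ℝ) :
    s * incGammaPoly s n L - ∑ j ∈ range (n + 1), incGammaCoeff s n j * (j * L ^ (j - 1))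
      = L ^ n := by
  have hderiv : ∑ j ∈ range (n + 1), incGammaCoeff s n j * (j * L ^ (j - 1))
      = ∑ j ∈ range n, s * (incGammaCoeff s n j * L ^ j) := by
    rw [sum_range_succ']
    simp only [CharP.cast_eq_zero, zero_mul, mul_zero, add_zero]
    refine sum_congr rfl fun j hj => ?_
    rw [← mul_assoc s, ← succ_mul_incGammaCoeff_succ (mem_range.1 hj)]
    push_cast
    ring
  rw [hderiv, incGammaPoly, sum_range_succ, mul_add, mul_sum, ← mul_assoc,
    mul_incGammaCoeff_self hs, one_mul, add_sub_cancel_left]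

lemma hasDerivAt_rpow_neg_mul_incGammaPoly {s M t : ℝ} (hs : s ≠ 0) (n : ℕ) (hM : M ≠ 0)
    (ht : t ≠ 0) :
    HasDerivAt (fun t => -(t ^ (-s) * incGammaPoly s n (log (t / M))))
      (t ^ (-s - 1) * log (t / M) ^ n) t := by
  have hlog : HasDerivAt (fun t => log (t / M)) t⁻¹ t := by
    convert ((hasDerivAt_id' t).div_const M).log (div_ne_zero ht hM) using 1
    field_simp
  have := ((hasDerivAt_rpow_const (p := -s) (Or.inl ht)).fun_mul
    ((hasDerivAt_incGammaPoly s n _).comp t hlog)).fun_neg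
  refine this.congr_deriv ?_
  rw [Function.comp_apply, ← mul_incGammaPoly_sub_deriv hs n, rpow_sub_one ht]
  field_simp
  ring

lemma integral_Ioo_rpow_mul_log_pow {s M b Λ : ℝ} (hs : s ≠ 0) (n : ℕ) (hM : M ≠ 0)
    (hb : 0 < b) (hbΛ : b ≤ Λ) :
    ∫ t in Set.Ioo b Λ, t ^ (-s - 1) * log (t / M) ^ n
      = b ^ (-s) * incGammaPoly s n (log (b / M))
        - Λ ^ (-s) * incGammaPoly s n (log (Λ / M)) := by
  have hpos : ∀ t ∈ Set.uIcc b Λ, t ≠ 0 := fun t ht =>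
    (hb.trans_le (Set.uIcc_of_le hbΛ ▸ ht).1).ne'
  have hcont : ContinuousOn (fun t => t ^ (-s - 1) * log (t / M) ^ n) (Set.uIcc b Λ) :=
    (continuousOn_id.rpow_const fun t ht => Or.inl (hpos t ht)).mul
      (((continuousOn_id.div_const M).log fun t ht => div_ne_zero (hpos t ht) hM).fun_pow n)
  rw [← integral_Ioc_eq_integral_Ioo, ← intervalIntegral.integral_of_le hbΛ,
    intervalIntegral.integral_eq_sub_of_hasDerivAt
      (fun t ht => hasDerivAt_rpow_neg_mul_incGammaPoly hs n hM (hpos t ht))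
      hcont.intervalIntegrable]
  ring

lemma integral_Ioo_rpow_mul_log_pow_le {s M b : ℝ} (hs : 0 < s) (n : ℕ) (hM : 0 < M)
    (hMb : M ≤ b) (Λ : ℝ) :
    ∫ t in Set.Ioo b Λ, t ^ (-s - 1) * log (t / M) ^ n
      ≤ b ^ (-s) * incGammaPoly s n (log (b / M)) := by
  have hb : 0 < b := hM.trans_le hMb
  have hlog_nonneg : ∀ {t}, M ≤ t → 0 ≤ log (t / M) := fun h =>
    log_nonneg ((one_le_div hM).2 h)
  have hbound_nonneg : 0 ≤ b ^ (-s) * incGammaPoly s n (log (b / M)) :=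
    mul_nonneg (rpow_nonneg hb.le _) (incGammaPoly_nonneg hs.le n (hlog_nonneg hMb))
  rcases le_or_gt Λ b with hΛb | hbΛ
  · rwa [Set.Ioo_eq_empty hΛb.not_gt, setIntegral_empty]
  · rw [integral_Ioo_rpow_mul_log_pow hs.ne' n hM.ne' hb hbΛ.le, sub_le_self_iff]
    exact mul_nonneg (rpow_nonneg (hb.trans hbΛ).le _)
      (incGammaPoly_nonneg hs.le n (hlog_nonneg (hMb.trans hbΛ.le)))

lemma logPlus_div {M : ℝ} (hM : 0 < M) (a : ℝ) : logPlus (a / M) = log (max a M / M) := by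
  rw [logPlus, ← max_div_div_right hM.le, div_self hM.ne', max_comm]

theorem stmt14_general (s : ℝ) (hs : 1 ≤ s) (n : ℕ) (M a Λ₀ : ℝ)
    (hM : 0 < M) (ha : 0 < a) :
    (∫ t in Set.Ioo (max a M) Λ₀, t ^ (-s - 1) * Real.log (t / M) ^ n)
      ≤ a ^ (-s) *
        ∑ j ∈ Finset.range (n + 1),
          ((Nat.factorial n : ℝ) / ((Nat.factorial j : ℝ) * s ^ (n - j + 1))) *
            logPlus (a / M) ^ j := by
  have hs0 : 0 < s := one_pos.trans_le hs
  have hMb : M ≤ max a M := le_max_right a M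
  calc _ ≤ max a M ^ (-s) * incGammaPoly s n (log (max a M / M)) :=
        integral_Ioo_rpow_mul_log_pow_le hs0 n hM hMb Λ₀
    _ ≤ a ^ (-s) * incGammaPoly s n (log (max a M / M)) :=
        mul_le_mul_of_nonneg_right (rpow_le_rpow_of_nonpos ha (le_max_left a M) (by linarith))
          (incGammaPoly_nonneg hs0.le n (log_nonneg ((one_le_div hM).2 hMb)))
    _ = _ := by rw [← logPlus_div hM]; rfl

theorem stmt14 (s : ℝ) (hs : 1 ≤ s) (n : ℕ) (M a Λ₀ : ℝ)
    (hM : 0 < M) (ha : 0 < a) (haΛ : a ≤ Λ₀) :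
    (∫ t in Set.Ioo (max a M) Λ₀, t ^ (-s - 1) * Real.log (t / M) ^ n)
      ≤ a ^ (-s) *
        ∑ j ∈ Finset.range (n + 1),
          ((Nat.factorial n : ℝ) / ((Nat.factorial j : ℝ) * s ^ (n - j + 1))) *
            logPlus (a / M) ^ j :=
  stmt14_general s hs n M a Λ₀ hM ha
end
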